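/- Let n ≥ m ≥ 1 and let A be an m × n nonnegative real matrix with entries at most c. Then ‖A‖_{S_1} ≤ (m + √m)√n · c / 2. -/

import Mathlib

/-!
Let `σ₁` be the largest singular value of `A` and `s` the sum of its entries. Testing `A Aᵀ`
against the all-ones vector gives `s ≤ √(mn) σ₁`, and `0 ≤ A ≤ c` gives `‖A‖_F² ≤ c s`, so
`‖A‖_F² ≤ K σ₁` with `K = c √(mn)`. By Cauchy–Schwarz the remaining singular values sum to at most
`√((m - 1)(‖A‖_F² - σ₁²)) ≤ √((m - 1) σ₁ (K - σ₁))`, and a second Cauchy–Schwarz in the plane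
bounds `σ₁ + √((m - 1) σ₁ (K - σ₁))` by `(1 + √m) K / 2`.
-/

open Finset

/-- Singular values (unsorted) of a complex matrix: square roots of eigenvalues of `A * Aᴴ`. -/
noncomputable def svalC {m n : ℕ} (A : Matrix (Fin m) (Fin n) ℂ) : Fin m → ℝ :=
  fun i => Real.sqrt ((Matrix.isHermitian_mul_conjTranspose_self A).eigenvalues i)

/-- Singular values of a complex matrix sorted in decreasing order. -/
noncomputable def svalCSorted {m n : ℕ} (A : Matrix (Fin m) (Fin n) ℂ) : Fin m → ℝ :=
  svalC A ∘ ⇑(Tuple.sort (fun i => -(svalC A i)))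

/-- Singular values (unsorted) of a real matrix. -/
noncomputable def svalR {m n : ℕ} (A : Matrix (Fin m) (Fin n) ℝ) : Fin m → ℝ :=
  fun i => Real.sqrt ((Matrix.isHermitian_mul_conjTranspose_self A).eigenvalues i)

/-- Singular values of a real matrix sorted in decreasing order. -/
noncomputable def svalRSorted {m n : ℕ} (A : Matrix (Fin m) (Fin n) ℝ) : Fin m → ℝ :=
  svalR A ∘ ⇑(Tuple.sort (fun i => -(svalR A i)))

/-- Ky Fan `k`-norm of a complex matrix: the sum of its `k` largest singular values. -/
noncomputable def kyFanC {m n : ℕ} (A : Matrix (Fin m) (Fin n) ℂ) (k : ℕ) : ℝ :=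
  ∑ i : Fin m, if (i : ℕ) < k then svalCSorted A i else 0

/-- Ky Fan `k`-norm of a real matrix. -/
noncomputable def kyFanR {m n : ℕ} (A : Matrix (Fin m) (Fin n) ℝ) (k : ℕ) : ℝ :=
  ∑ i : Fin m, if (i : ℕ) < k then svalRSorted A i else 0

/-- The adjacency matrix of a simple graph is Hermitian (over `ℝ`). -/
lemma adjHerm {n : ℕ} (G : SimpleGraph (Fin n)) [DecidableRel G.Adj] :
    (G.adjMatrix ℝ).IsHermitian := by
  have h := G.isSymm_adjMatrix (α := ℝ)
  simpa [Matrix.IsHermitian, Matrix.conjTranspose, Matrix.IsSymm, Matrix.transpose, Matrix.map, conj_trivial] using h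

/-- Singular values of a graph (unsorted). -/
noncomputable def gsval {n : ℕ} (G : SimpleGraph (Fin n)) [DecidableRel G.Adj] : Fin n → ℝ :=
  svalR (G.adjMatrix ℝ)

/-- Singular values of a graph sorted in decreasing order. -/
noncomputable def gsvalSorted {n : ℕ} (G : SimpleGraph (Fin n)) [DecidableRel G.Adj] : Fin n → ℝ :=
  svalRSorted (G.adjMatrix ℝ)

/-- Eigenvalues of a graph sorted in decreasing order: `geigSorted G 0 = μ₁ ≥ ⋯ ≥ μₙ`. -/
noncomputable def geigSorted {n : ℕ} (G : SimpleGraph (Fin n)) [DecidableRel G.Adj] : Fin n → ℝ :=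
  (adjHerm G).eigenvalues ∘ ⇑(Tuple.sort (fun i => -((adjHerm G).eigenvalues i)))

/-- Ky Fan `k`-norm of a graph. -/
noncomputable def kyFanG {n : ℕ} (G : SimpleGraph (Fin n)) [DecidableRel G.Adj] (k : ℕ) : ℝ :=
  kyFanR (G.adjMatrix ℝ) k

open Matrix

theorem add_le_one_add_sqrt_mul_div_two {m t u K : ℝ} (hm : 1 ≤ m) (ht : 0 ≤ t) (htK : t ≤ K)
    (h : u ^ 2 ≤ (m - 1) * (t * (K - t))) : t + u ≤ (1 + √m) * K / 2 := by
  set b := √(m - 1)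
  set w := √(t * (K - t))
  have ha : √m ^ 2 = m := Real.sq_sqrt (by linarith)
  have hb : b ^ 2 = m - 1 := Real.sq_sqrt (by linarith)
  have hw : w ^ 2 = t * (K - t) := Real.sq_sqrt (by nlinarith)
  have hu : u ≤ b * w := by
    rw [← Real.sqrt_mul (by linarith)]
    exact Real.le_sqrt_of_sq_le h
  have lagrange : (√m * K / 2) ^ 2 - (t - K / 2 + b * w) ^ 2 = (b * (t - K / 2) - w) ^ 2 := by
    linear_combination (K ^ 2 / 4) * ha - (w ^ 2 + (t - K / 2) ^ 2) * hb - m * hw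
  have hcs : t - K / 2 + b * w ≤ √m * K / 2 :=
    (abs_le_of_sq_le_sq' (by linarith [sq_nonneg (b * (t - K / 2) - w)])
      (by have := ht.trans htK; positivity)).2
  linarith

theorem Finset.sq_sum_erase_le {ι : Type*} [DecidableEq ι] (s : Finset ι) (f : ι → ℝ) {a : ι}
    (ha : a ∈ s) : (∑ i ∈ s.erase a, f i) ^ 2 ≤ (#s - 1 : ℝ) * (∑ i ∈ s, f i ^ 2 - f a ^ 2) := by
  have := sq_sum_le_card_mul_sum_sq (s := s.erase a) (f := f)
  rw [card_erase_of_mem ha, Nat.cast_pred (card_pos.2 ⟨a, ha⟩)] at this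
  rwa [← sum_erase_add _ _ ha, add_sub_cancel_right]

theorem Matrix.IsHermitian.dotProduct_mulVec_le {ι : Type*} [Fintype ι] [DecidableEq ι]
    {H : Matrix ι ι ℝ} (hH : H.IsHermitian) {μ : ℝ} (hμ : ∀ i, hH.eigenvalues i ≤ μ)
    (x : ι → ℝ) : x ⬝ᵥ H *ᵥ x ≤ μ * (x ⬝ᵥ x) := by
  have hpsd : (algebraMap ℝ _ μ - H).PosSemidef := by
    refine posSemidef_iff_isHermitian_and_spectrum_nonneg.2 ⟨?_, ?_⟩
    · exact ((IsSelfAdjoint.algebraMap _ (.all μ)).sub hH :)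
    · rw [← spectrum.singleton_sub_eq, hH.spectrum_real_eq_range_eigenvalues]
      rintro _ ⟨_, rfl, _, ⟨i, rfl⟩, rfl⟩
      simpa using hμ i
  simpa [sub_mulVec, Algebra.algebraMap_eq_smul_one, smul_mulVec, dotProduct_sub] using
    hpsd.dotProduct_mulVec_nonneg x

section SingularValues

variable {m n : ℕ} (A : Matrix (Fin m) (Fin n) ℝ)

theorem svalR_nonneg (i : Fin m) : 0 ≤ svalR A i :=
  Real.sqrt_nonneg _

theorem svalR_sq (i : Fin m) :
    svalR A i ^ 2 = (isHermitian_mul_conjTranspose_self A).eigenvalues i :=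
  Real.sq_sqrt (eigenvalues_self_mul_conjTranspose_nonneg A i)

theorem sum_svalR_sq : ∑ i, svalR A i ^ 2 = ∑ i, ∑ j, A i j ^ 2 := by
  have htr := (isHermitian_mul_conjTranspose_self A).trace_eq_sum_eigenvalues
  simp only [RCLike.ofReal_real_eq_id, id] at htr
  simp_rw [svalR_sq, ← htr]
  simp [trace, mul_apply, sq]

theorem sum_entries_le_sqrt_mul_svalR {i₀ : Fin m} (hi₀ : ∀ i, svalR A i ≤ svalR A i₀) :
    ∑ i, ∑ j, A i j ≤ √m * √n * svalR A i₀ := by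
  have heig : ∀ i, (isHermitian_mul_conjTranspose_self A).eigenvalues i ≤ svalR A i₀ ^ 2 :=
    fun i => svalR_sq A i ▸ pow_le_pow_left₀ (svalR_nonneg A i) (hi₀ i) 2
  have hones : (1 : Fin m → ℝ) ⬝ᵥ (A * Aᵀ) *ᵥ 1 = ∑ j, (∑ i, A i j) ^ 2 := by
    simp only [dotProduct, mulVec, mul_apply, transpose_apply, Pi.one_apply, one_mul, mul_one,
      sq, sum_mul_sum]
    simp_rw [sum_comm (s := (univ : Finset (Fin m))) (t := (univ : Finset (Fin n)))]
  have hray := (isHermitian_mul_conjTranspose_self A).dotProduct_mulVec_le heig 1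
  rw [conjTranspose_eq_transpose_of_trivial, hones] at hray
  have hsq : (∑ i, ∑ j, A i j) ^ 2 ≤ (√m * √n * svalR A i₀) ^ 2 :=
    calc (∑ i, ∑ j, A i j) ^ 2 = (∑ j, ∑ i, A i j) ^ 2 := by rw [sum_comm]
      _ ≤ n * ∑ j, (∑ i, A i j) ^ 2 := by
          simpa using sq_sum_le_card_mul_sum_sq (s := univ) (f := fun j => ∑ i, A i j)
      _ ≤ n * (svalR A i₀ ^ 2 * m) := by
          gcongr
          simpa using hray
      _ = (√m * √n * svalR A i₀) ^ 2 := by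
          rw [mul_pow, mul_pow, Real.sq_sqrt m.cast_nonneg, Real.sq_sqrt n.cast_nonneg]
          ring
  exact (abs_le_of_sq_le_sq' hsq (by have := svalR_nonneg A i₀; positivity)).2

end SingularValues

/-- Koolen–Moulton bound for nonnegative matrices: `‖A‖_{S_1} ≤ (m + √m)√n · c / 2`. -/
theorem trace_norm_le_absolute {m n : ℕ} (hm : 1 ≤ m) (hmn : m ≤ n)
    (A : Matrix (Fin m) (Fin n) ℝ) (c : ℝ) (hA : ∀ i j, 0 ≤ A i j) (hc : ∀ i j, A i j ≤ c) :
    ∑ i, svalR A i ≤ ((m : ℝ) + Real.sqrt m) * Real.sqrt n * c / 2 := by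
  obtain ⟨i₀, -, hi₀⟩ := exists_max_image univ (svalR A) (univ_nonempty_iff.2 ⟨⟨0, hm⟩⟩)
  set t := svalR A i₀
  set K := √m * √n * c
  have ht : 0 ≤ t := svalR_nonneg A i₀
  have hc₀ : 0 ≤ c := (hA ⟨0, hm⟩ ⟨0, hm.trans hmn⟩).trans (hc _ _)
  have hK : 0 ≤ K := by positivity
  have hfrob : ∑ i, svalR A i ^ 2 ≤ K * t :=
    calc ∑ i, svalR A i ^ 2 = ∑ i, ∑ j, A i j ^ 2 := sum_svalR_sq A
      _ ≤ ∑ i, ∑ j, c * A i j := by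
          gcongr with i _ j _
          rw [sq]
          exact mul_le_mul_of_nonneg_right (hc i j) (hA i j)
      _ = c * ∑ i, ∑ j, A i j := by simp only [mul_sum]
      _ ≤ c * (√m * √n * t) := by
          gcongr
          exact sum_entries_le_sqrt_mul_svalR A fun i => hi₀ i (mem_univ i)
      _ = K * t := by ring
  have htK : t ≤ K := by
    have := (single_le_sum (fun i _ => sq_nonneg (svalR A i)) (mem_univ i₀)).trans hfrob
    nlinarith
  have hrest : (∑ i ∈ univ.erase i₀, svalR A i) ^ 2 ≤ (m - 1) * (t * (K - t)) := by
    refine (sq_sum_erase_le univ (svalR A) (mem_univ i₀)).trans ?_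
    rw [card_univ, Fintype.card_fin]
    have hm' : (0 : ℝ) ≤ m - 1 := sub_nonneg.2 (by exact_mod_cast hm)
    gcongr
    linarith
  calc ∑ i, svalR A i = t + ∑ i ∈ univ.erase i₀, svalR A i := (add_sum_erase _ _ (mem_univ i₀)).symm
    _ ≤ (1 + √m) * K / 2 := add_le_one_add_sqrt_mul_div_two (by exact_mod_cast hm) ht htK hrest
    _ = (m + √m) * √n * c / 2 := by
        linear_combination (√n * c / 2) * Real.mul_self_sqrt (Nat.cast_nonneg (α := ℝ) m)
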